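/- arXiv:1908.07946 — 3 statements merged into one kernel-verified Lean document; each statement's English description precedes it below -/
import Mathlib

section
/- Let G be a group acting on sets Ω and Ω', and let φ : Q[Ω] → Q[Ω'] be a G-equivariant linear map between the permutation modules. If Ω has finitely many G-orbits, then φ is bounded with respect to the ℓ1-norms: there exists C > 0 such that ‖φ(x)‖₁ ≤ C‖x‖₁ for all x ∈ Q[Ω]. -/
/-!
Since `G` permutes the basis of `ℚ[Ω']`, the ℓ1-norm is `G`-invariant, so by equivariance
`‖φ(g • ω)‖₁ = ‖φ(ω)‖₁`. With finitely many orbits, the ℓ1-norms of the images of basis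
vectors take only finitely many values, hence are bounded by some `C`, and the triangle
inequality gives `‖φ(x)‖₁ ≤ C ‖x‖₁`.
-/

def l1 {Ω : Type*} (x : Ω →₀ ℚ) : ℚ := x.sum fun _ a => |a|

section L1

variable {Ω Ω' : Type*}

lemma l1_nonneg (x : Ω →₀ ℚ) : 0 ≤ l1 x :=
  Finset.sum_nonneg fun _ _ => abs_nonneg _

lemma l1_eq_sum {s : Finset Ω} (x : Ω →₀ ℚ) (hs : x.support ⊆ s) :
    l1 x = ∑ a ∈ s, |x a| :=
  Finsupp.sum_of_support_subset x hs _ fun _ _ => abs_zero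

lemma l1_add_le (x y : Ω →₀ ℚ) : l1 (x + y) ≤ l1 x + l1 y := by
  classical
  rw [l1_eq_sum (x + y) Finsupp.support_add, l1_eq_sum x Finset.subset_union_left,
    l1_eq_sum y Finset.subset_union_right, ← Finset.sum_add_distrib]
  exact Finset.sum_le_sum fun a _ => abs_add_le (x a) (y a)

lemma l1_smul (c : ℚ) (x : Ω →₀ ℚ) : l1 (c • x) = |c| * l1 x := by
  rw [l1, Finsupp.sum_smul_index fun _ => abs_zero, l1, Finsupp.mul_sum]
  exact Finsupp.sum_congr fun a _ => abs_mul c (x a)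

lemma l1_mapDomain {f : Ω → Ω'} (hf : Function.Injective f) (x : Ω →₀ ℚ) :
    l1 (Finsupp.mapDomain f x) = l1 x :=
  Finsupp.sum_mapDomain_index_inj hf

lemma l1_finsuppSum_le {ι : Type*} (x : ι →₀ ℚ) (v : ι → ℚ → Ω →₀ ℚ) :
    l1 (x.sum v) ≤ x.sum fun i a => l1 (v i a) :=
  Finset.le_sum_of_subadditive l1 le_rfl l1_add_le _ _

lemma l1_map_le_of_forall_single_le (φ : (Ω →₀ ℚ) →ₗ[ℚ] (Ω' →₀ ℚ)) {C : ℚ}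
    (hC : ∀ ω, l1 (φ (Finsupp.single ω 1)) ≤ C) (x : Ω →₀ ℚ) :
    l1 (φ x) ≤ C * l1 x := by
  have hφx : φ x = x.sum fun ω a => a • φ (Finsupp.single ω 1) := by
    conv_lhs => rw [← Finsupp.sum_single x]
    rw [map_finsuppSum]
    exact Finsupp.sum_congr fun ω _ => by rw [← map_smul, Finsupp.smul_single_one]
  calc l1 (φ x) ≤ x.sum fun ω a => |a| * l1 (φ (Finsupp.single ω 1)) := by
        rw [hφx]
        refine (l1_finsuppSum_le _ _).trans_eq ?_
        simp only [l1_smul]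
    _ ≤ x.sum fun _ a => |a| * C :=
        Finsupp.sum_le_sum fun ω _ => mul_le_mul_of_nonneg_left (hC ω) (abs_nonneg _)
    _ = C * l1 x := by rw [l1, Finsupp.mul_sum]; simp only [mul_comm]

end L1

lemma l1_map_single_smul {G Ω Ω' : Type*} [Group G] [MulAction G Ω] [MulAction G Ω']
    (φ : (Ω →₀ ℚ) →ₗ[ℚ] (Ω' →₀ ℚ))
    (hφ : ∀ (g : G) (x : Ω →₀ ℚ),
      φ (Finsupp.mapDomain (g • ·) x) = Finsupp.mapDomain (g • ·) (φ x))
    (g : G) (ω : Ω) :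
    l1 (φ (Finsupp.single (g • ω) 1)) = l1 (φ (Finsupp.single ω 1)) := by
  rw [← Finsupp.mapDomain_single (f := (g • ·)), hφ, l1_mapDomain (MulAction.injective g)]

/-- A `G`-equivariant linear map between permutation modules `ℚ[Ω] → ℚ[Ω']` is bounded
with respect to the ℓ1-norms, provided `Ω` has finitely many `G`-orbits. -/
theorem stmt1 {G Ω Ω' : Type*} [Group G] [MulAction G Ω] [MulAction G Ω']
    (φ : (Ω →₀ ℚ) →ₗ[ℚ] (Ω' →₀ ℚ))
    (hφ : ∀ (g : G) (x : Ω →₀ ℚ),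
      φ (Finsupp.mapDomain (g • ·) x) = Finsupp.mapDomain (g • ·) (φ x))
    (horb : ∃ S : Finset Ω, ∀ ω : Ω, ∃ s ∈ S, ∃ g : G, g • s = ω) :
    ∃ C : ℚ, 0 < C ∧ ∀ x : Ω →₀ ℚ, l1 (φ x) ≤ C * l1 x := by
  obtain ⟨S, hS⟩ := horb
  set C : ℚ := 1 + ∑ s ∈ S, l1 (φ (Finsupp.single s 1))
  have hsum_nonneg : 0 ≤ ∑ s ∈ S, l1 (φ (Finsupp.single s 1)) :=
    Finset.sum_nonneg fun _ _ => l1_nonneg _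
  have hbound : ∀ ω, l1 (φ (Finsupp.single ω 1)) ≤ C := by
    intro ω
    obtain ⟨s, hs, g, rfl⟩ := hS ω
    rw [l1_map_single_smul φ hφ]
    linarith [Finset.single_le_sum (fun s _ => l1_nonneg (φ (Finsupp.single s 1))) hs]
  exact ⟨C, by linarith, l1_map_le_of_forall_single_le φ hbound⟩
end

section
/- Let Γ be a connected locally finite graph with vertex set V and edge set E, equipped with an orientation, and let δ : Q[E] → Q[V] be the simplicial boundary map and ε : Q[V] → Q the augmentation. Suppose μ ∈ Q[E] is an integral 1-chain (all coefficients in ℤ) with δ(μ) = m(v − u) for vertices u ≠ v and a positive integer m. Then there exists an integral 1-chain ν ∈ Q[E] with δ(ν) = v − u, with ν ⪯ μ (coefficientwise: t_e² ≤ t_e s_e for all e, where ν = ∑ t_e e and μ = ∑ s_e e), and ‖ν‖₁ ≥ dist(u, v), where dist is the combinatorial path metric on Γ. -/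
/-!
Let `S` be the set of vertices reachable from `u` by walks that traverse every edge in the
direction in which `μ` flows through it. Pairing `δμ = m(v - u)` with the indicator of `S`
gives the net flow of `μ` out of `S`, which is `≥ 0` because `S` is closed under following `μ`,
but would be `-m` if `v ∉ S`. So some `μ`-following walk joins `u` to `v`. Shortening it to a
path and adding up its darts as `±` oriented edges gives `ν`: the boundary telescopes to
`v - u`, every coefficient is `0` or `±1` with the sign of the integral chain `μ` (hence
`ν ⪯ μ`), and `‖ν‖₁` is the length of the path, at least `dist(u, v)`.
-/

/-- The simplicial boundary map `δ : ℚ[E] → ℚ[V]` of an oriented graph: an edge `e`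
oriented from `src e` to `tgt e` is sent to `tgt e − src e`. -/
noncomputable def boundaryMap {V : Type*} (G : SimpleGraph V)
    (src tgt : G.edgeSet → V) (x : G.edgeSet →₀ ℚ) : V →₀ ℚ :=
  x.sum fun e t => t • (Finsupp.single (tgt e) 1 - Finsupp.single (src e) 1)

lemma sq_le_mul_of_pos_of_isInt {s q : ℚ} (hs : s = 1 ∨ s = -1) (hq : ∃ z : ℤ, q = z)
    (h : 0 < s * q) : s ^ 2 ≤ s * q := by
  obtain ⟨z, rfl⟩ := hq
  rcases hs with rfl | rfl
  · norm_num at h ⊢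
    exact_mod_cast (Int.cast_pos.1 h : 0 < z)
  · norm_num at h ⊢
    exact_mod_cast (by omega : 1 ≤ -z)

open Finsupp

namespace SimpleGraph

variable {V : Type*} {G : SimpleGraph V} (src tgt : G.edgeSet → V)

lemma boundaryMap_eq_linearCombination (x : G.edgeSet →₀ ℚ) :
    boundaryMap G src tgt x =
      linearCombination ℚ (fun e => single (tgt e) 1 - single (src e) 1) x :=
  (linearCombination_apply _ _).symm

lemma boundaryMap_add (x y : G.edgeSet →₀ ℚ) :
    boundaryMap G src tgt (x + y) = boundaryMap G src tgt x + boundaryMap G src tgt y := by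
  simp only [boundaryMap_eq_linearCombination, map_add]

lemma boundaryMap_single (e : G.edgeSet) (c : ℚ) :
    boundaryMap G src tgt (single e c) = c • (single (tgt e) 1 - single (src e) 1) := by
  rw [boundaryMap_eq_linearCombination, linearCombination_single]

/-- The left side is the net flow of `μ` out of `S`; it cannot be negative when no edge
carries flow into `S`. -/
lemma linearCombination_indicator_boundaryMap_nonneg (μ : G.edgeSet →₀ ℚ) (S : Set V)
    (hpos : ∀ e, 0 < μ e → src e ∈ S → tgt e ∈ S)
    (hneg : ∀ e, μ e < 0 → tgt e ∈ S → src e ∈ S) :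
    0 ≤ linearCombination ℚ (S.indicator (1 : V → ℚ)) (boundaryMap G src tgt μ) := by
  classical
  rw [boundaryMap, map_finsuppSum]
  refine Finset.sum_nonneg fun e _ => ?_
  simp only [map_smul, map_sub, linearCombination_single, smul_eq_mul, Set.indicator_apply,
    Pi.one_apply]
  rcases lt_trichotomy (μ e) 0 with hlt | heq | hgt
  · by_cases ht : tgt e ∈ S
    · simp [ht, hneg e hlt ht]
    · simp only [ht, if_false]; split_ifs <;> linarith
  · simp [heq]
  · by_cases hs : src e ∈ S
    · simp [hs, hpos e hgt hs]
    · simp only [hs, if_false]; split_ifs <;> linarith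

def Dart.toEdgeSet (d : G.Dart) : G.edgeSet := ⟨d.edge, d.edge_mem⟩

open scoped Classical in
noncomputable def Dart.sign (d : G.Dart) : ℚ := if src d.toEdgeSet = d.fst then 1 else -1

lemma Dart.sign_eq_one_or_neg_one (d : G.Dart) : d.sign src = 1 ∨ d.sign src = -1 := by
  unfold Dart.sign; split_ifs <;> simp

lemma Dart.exists_int_sign (d : G.Dart) : ∃ z : ℤ, d.sign src = z := by
  rcases d.sign_eq_one_or_neg_one src with h | h
  exacts [⟨1, by simp [h]⟩, ⟨-1, by simp [h]⟩]

variable {src tgt}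

lemma boundaryMap_single_sign (hor : ∀ e : G.edgeSet, (e : Sym2 V) = s(src e, tgt e))
    (d : G.Dart) :
    boundaryMap G src tgt (single d.toEdgeSet (d.sign src)) = single d.snd 1 - single d.fst 1 := by
  have h : s(d.fst, d.snd) = s(src d.toEdgeSet, tgt d.toEdgeSet) := hor d.toEdgeSet
  rw [boundaryMap_single, Dart.sign]
  split_ifs with hs
  · rcases Sym2.eq_iff.1 h with ⟨-, h2⟩ | ⟨h1, h2⟩
    · rw [one_smul, h2, hs]
    · exact absurd (hs.symm.trans h2.symm) d.fst_ne_snd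
  · rcases Sym2.eq_iff.1 h with ⟨h1, -⟩ | ⟨h1, h2⟩
    · exact absurd h1.symm hs
    · rw [← h1, ← h2, neg_one_smul, neg_sub]

variable (src)

noncomputable def Walk.chain {a b : V} (p : G.Walk a b) : G.edgeSet →₀ ℚ :=
  (p.darts.map fun d => single d.toEdgeSet (d.sign src)).sum

@[simp] lemma Walk.chain_nil {a : V} : (Walk.nil : G.Walk a a).chain src = 0 := rfl

@[simp] lemma Walk.chain_cons {a b c : V} (h : G.Adj a b) (p : G.Walk b c) :
    (Walk.cons h p).chain src =
      single (Dart.toEdgeSet ⟨(a, b), h⟩) (Dart.sign src ⟨(a, b), h⟩) + p.chain src := rfl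

lemma boundaryMap_walk_chain (hor : ∀ e : G.edgeSet, (e : Sym2 V) = s(src e, tgt e))
    {a b : V} (p : G.Walk a b) :
    boundaryMap G src tgt (p.chain src) = single b 1 - single a 1 := by
  induction p with
  | nil => simp [boundaryMap]
  | cons h p ih =>
    rw [Walk.chain_cons, boundaryMap_add, boundaryMap_single_sign hor, ih, sub_add_sub_cancel']

lemma Dart.abs_sign (d : G.Dart) : |d.sign src| = 1 := by
  rcases d.sign_eq_one_or_neg_one src with h | h <;> simp [h]

lemma Walk.chain_apply_of_notMem {a b : V} (p : G.Walk a b) {e : G.edgeSet}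
    (he : (e : Sym2 V) ∉ p.edges) : p.chain src e = 0 := by
  induction p with
  | nil => rfl
  | cons h p ih =>
    rw [Walk.edges_cons, List.mem_cons, not_or] at he
    rw [Walk.chain_cons, Finsupp.add_apply, ih he.2, add_zero, single_eq_of_ne]
    rintro rfl
    exact he.1 rfl

lemma Walk.IsTrail.chain_apply {a b : V} {p : G.Walk a b} (hp : p.IsTrail) (e : G.edgeSet) :
    p.chain src e = 0 ∨ ∃ d ∈ p.darts, d.toEdgeSet = e ∧ p.chain src e = d.sign src := by
  induction p with
  | nil => exact Or.inl rfl
  | cons h p ih =>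
    rw [Walk.isTrail_cons] at hp
    rw [Walk.chain_cons, Finsupp.add_apply]
    by_cases he : Dart.toEdgeSet ⟨(_, _), h⟩ = e
    · subst he
      refine Or.inr ⟨_, List.mem_cons_self .., rfl, ?_⟩
      rw [single_eq_same, p.chain_apply_of_notMem src hp.2, add_zero]
    · rw [single_eq_of_ne (Ne.symm he), zero_add]
      rcases ih hp.1 with h0 | ⟨d, hd, hde, hval⟩
      · exact Or.inl h0
      · exact Or.inr ⟨d, List.mem_cons_of_mem _ hd, hde, hval⟩

lemma Walk.IsTrail.sum_abs_chain {a b : V} {p : G.Walk a b} (hp : p.IsTrail) :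
    ((p.chain src).sum fun _ c => |c|) = p.length := by
  induction p with
  | nil => simp
  | cons h p ih =>
    rw [Walk.isTrail_cons] at hp
    have hdisj : Disjoint
        (single (Dart.toEdgeSet ⟨(_, _), h⟩) (Dart.sign src ⟨(_, _), h⟩)).support
        (p.chain src).support := by
      refine Finset.disjoint_left.2 fun e he he' => ?_
      obtain rfl := Finset.mem_singleton.1 (support_single_subset he)
      exact Finsupp.mem_support_iff.1 he' (p.chain_apply_of_notMem src hp.2)
    rw [Walk.chain_cons, sum_add_index_of_disjoint hdisj, sum_single_index abs_zero, ih hp.1,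
      Dart.abs_sign, Walk.length_cons]
    push_cast
    ring

def Dart.FollowsChain (μ : G.edgeSet →₀ ℚ) (d : G.Dart) : Prop :=
  0 < d.sign src * μ d.toEdgeSet

variable {src}

lemma exists_walk_followsChain (hor : ∀ e : G.edgeSet, (e : Sym2 V) = s(src e, tgt e))
    {μ : G.edgeSet →₀ ℚ} {u v : V} {m : ℕ} (hm : 0 < m)
    (hδμ : boundaryMap G src tgt μ = (m : ℚ) • (single v 1 - single u 1)) :
    ∃ p : G.Walk u v, ∀ d ∈ p.darts, d.FollowsChain src μ := by
  set S : Set V := {x | ∃ p : G.Walk u x, ∀ d ∈ p.darts, d.FollowsChain src μ}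
  have hS : ∀ {x y : V} (h : G.Adj x y),
      x ∈ S → Dart.FollowsChain src μ ⟨(x, y), h⟩ → y ∈ S := by
    rintro x y h ⟨p, hp⟩ hd
    refine ⟨p.concat h, fun d hd' => ?_⟩
    rw [Walk.darts_concat, List.concat_eq_append, List.mem_append, List.mem_singleton] at hd'
    rcases hd' with hd' | rfl
    exacts [hp d hd', hd]
  have hadj : ∀ e : G.edgeSet, G.Adj (src e) (tgt e) := fun e => by
    simpa only [hor e, mem_edgeSet] using e.2
  have hpos : ∀ e, 0 < μ e → src e ∈ S → tgt e ∈ S := by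
    intro e he hs
    refine hS (hadj e) hs ?_
    have hedge : Dart.toEdgeSet ⟨(src e, tgt e), hadj e⟩ = e := Subtype.ext (hor e).symm
    simp [Dart.FollowsChain, Dart.sign, hedge, he]
  have hneg : ∀ e, μ e < 0 → tgt e ∈ S → src e ∈ S := by
    intro e he ht
    refine hS (hadj e).symm ht ?_
    have hedge : Dart.toEdgeSet ⟨(tgt e, src e), (hadj e).symm⟩ = e :=
      Subtype.ext ((hor e).trans Sym2.eq_swap).symm
    simp [Dart.FollowsChain, Dart.sign, hedge, (hadj e).ne, he]
  by_contra hv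
  have hu : u ∈ S := ⟨Walk.nil, by simp⟩
  have hflux := linearCombination_indicator_boundaryMap_nonneg src tgt μ S hpos hneg
  have hvS : v ∉ S := hv
  simp [hδμ, hu, hvS] at hflux
  omega

end SimpleGraph

theorem stmt5_general {V : Type*} (G : SimpleGraph V)
    (src tgt : G.edgeSet → V)
    (hor : ∀ e : G.edgeSet, (e : Sym2 V) = s(src e, tgt e))
    (μ : G.edgeSet →₀ ℚ) (hint : ∀ e, ∃ z : ℤ, μ e = z)
    (u v : V) (m : ℕ) (hm : 0 < m)
    (hδμ : boundaryMap G src tgt μ =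
      (m : ℚ) • (Finsupp.single v 1 - Finsupp.single u 1)) :
    ∃ ν : G.edgeSet →₀ ℚ,
      (∀ e, ∃ z : ℤ, ν e = z) ∧
      boundaryMap G src tgt ν = Finsupp.single v 1 - Finsupp.single u 1 ∧
      (∀ e, (ν e) ^ 2 ≤ ν e * μ e) ∧
      (G.dist u v : ℚ) ≤ ν.sum fun _ a => |a| := by
  classical
  obtain ⟨p, hp⟩ := SimpleGraph.exists_walk_followsChain hor hm hδμ
  have hq : p.bypass.IsTrail := p.bypass_isPath.isTrail
  refine ⟨p.bypass.chain src, fun e => ?_, SimpleGraph.boundaryMap_walk_chain src hor _,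
    fun e => ?_, ?_⟩
  · rcases hq.chain_apply src e with h | ⟨d, -, -, h⟩
    exacts [⟨0, by simp [h]⟩, h ▸ d.exists_int_sign src]
  · rcases hq.chain_apply src e with h | ⟨d, hd, rfl, h⟩
    · simp [h]
    · rw [h]
      exact sq_le_mul_of_pos_of_isInt (d.sign_eq_one_or_neg_one src) (hint _)
        (hp d (p.darts_bypass_subset_darts hd))
  · rw [hq.sum_abs_chain]
    exact_mod_cast G.dist_le p.bypass

/-- Lemma 4.9 (Flemming–Martínez-Pedroza type): if an integral 1-chain `μ` has boundary
`m(v − u)`, then there is an integral 1-chain `ν ⪯ μ` with boundary `v − u` and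
ℓ1-norm at least `dist(u, v)`. -/
theorem stmt5 {V : Type*} (G : SimpleGraph V) (hconn : G.Connected)
    (hlf : ∀ v : V, (G.neighborSet v).Finite)
    (src tgt : G.edgeSet → V)
    (hor : ∀ e : G.edgeSet, (e : Sym2 V) = s(src e, tgt e))
    (μ : G.edgeSet →₀ ℚ) (hint : ∀ e, ∃ z : ℤ, μ e = z)
    (u v : V) (huv : u ≠ v) (m : ℕ) (hm : 0 < m)
    (hδμ : boundaryMap G src tgt μ =
      (m : ℚ) • (Finsupp.single v 1 - Finsupp.single u 1)) :
    ∃ ν : G.edgeSet →₀ ℚ,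
      (∀ e, ∃ z : ℤ, ν e = z) ∧
      boundaryMap G src tgt ν = Finsupp.single v 1 - Finsupp.single u 1 ∧
      (∀ e, (ν e) ^ 2 ≤ ν e * μ e) ∧
      (G.dist u v : ℚ) ≤ ν.sum fun _ a => |a| :=
  stmt5_general G src tgt hor μ hint u v m hm hδμ
end

section
/- Let A ∗_C B be an amalgamated free product. If x₁, …, x_n (n ≥ 1) is a reduced word — that is, each x_i lies in A or B, successive letters lie in different factors, no x_i lies in C when n > 1, and x₁ ≠ 1 when n = 1 — then the product x₁ ⋯ x_n is not the identity element of A ∗_C B. -/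
/-!
The universal property of `P` yields a homomorphism from `P` to Mathlib's amalgamated product
`Monoid.PushoutI` of the two-member family `A, B` indexed by `Bool`, so it suffices to see that the
image of the word there is nontrivial. For `n ≥ 2` the word is a reduced word of `PushoutI`, which
is nontrivial by the normal form theorem `PushoutI.Reduced.eq_empty_of_mem_range`; for `n = 1` it is
a single letter, and the factor maps into `PushoutI` are injective.
-/

open Monoid Function

universe u

instance Bool.condGroup {A B : Type u} [Group A] [Group B] :
    ∀ b : Bool, Group (bif b then B else A)
  | false => ‹Group A›
  | true => ‹Group B›

def MonoidHom.cond {A B : Type u} {C : Type*} [Group A] [Group B] [Group C]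
    (iA : C →* A) (iB : C →* B) :
    ∀ b : Bool, C →* bif b then B else A
  | false => iA
  | true => iB

namespace Monoid.PushoutI

variable {ι H : Type*} {G : ι → Type*} [∀ i, Group (G i)] [Group H] {φ : ∀ i, H →* G i}

theorem list_prod_map_of_ne_one (hφ : ∀ i, Injective (φ i)) {l : List (Σ i, G i)}
    (hl : l ≠ []) (hchain : l.IsChain fun g g' => g.1 ≠ g'.1)
    (hreduced : ∀ g ∈ l, g.2 ∉ (φ g.1).range) :
    (l.map fun g => of (φ := φ) g.1 g.2).prod ≠ 1 := by
  classical
  let w : CoprodI.Word G :=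
    ⟨l, fun g hg hg1 => hreduced g hg (hg1 ▸ one_mem _), hchain⟩
  intro h
  have hw : ofCoprodI w.prod ∈ (base φ).range := by
    rw [CoprodI.Word.prod, map_list_prod, List.map_map]
    simp [comp_def, ofCoprodI_of, w, h]
  exact hl (congrArg CoprodI.Word.toList (Reduced.eq_empty_of_mem_range (w := w) hφ hreduced hw))

end Monoid.PushoutI

namespace Equiv

variable {A B : Type u}

theorem sumEquivSigmaBool_fst (s : A ⊕ B) : (sumEquivSigmaBool A B s).1 = !s.isLeft := by
  cases s <;> rfl

theorem sumEquivSigmaBool_snd_ne_one [Group A] [Group B] {s : A ⊕ B} (hA : s ≠ .inl 1)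
    (hB : s ≠ .inr 1) : (sumEquivSigmaBool A B s).2 ≠ 1 := by
  rcases s with a | b <;> intro h
  exacts [hA (congrArg Sum.inl h), hB (congrArg Sum.inr h)]

theorem sumEquivSigmaBool_snd_notMem_range [Group A] [Group B] {C : Type*} [Group C]
    {iA : C →* A} {iB : C →* B} {s : A ⊕ B} (hA : ∀ c, s ≠ .inl (iA c))
    (hB : ∀ c, s ≠ .inr (iB c)) :
    (sumEquivSigmaBool A B s).2 ∉ (MonoidHom.cond iA iB (sumEquivSigmaBool A B s).1).range := by
  rcases s with a | b <;> rintro ⟨c, hc⟩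
  exacts [hA c (congrArg Sum.inl hc.symm), hB c (congrArg Sum.inr hc.symm)]

end Equiv

theorem stmt13_general {A B C P : Type} [Group A] [Group B] [Group C] [Group P]
    (iA : C →* A) (iB : C →* B)
    (hiA : Function.Injective iA) (hiB : Function.Injective iB)
    (jA : A →* P) (jB : B →* P)
    (huniv : ∀ (Q : Type) [Group Q] (fA : A →* Q) (fB : B →* Q),
      fA.comp iA = fB.comp iB →
        ∃! f : P →* Q, f.comp jA = fA ∧ f.comp jB = fB)
    (n : ℕ) (hn : 1 ≤ n) (x : Fin n → A ⊕ B)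
    (halt : ∀ (i : ℕ) (h : i + 1 < n),
      (x ⟨i, Nat.lt_of_succ_lt h⟩).isLeft ≠ (x ⟨i + 1, h⟩).isLeft)
    (hnotC : 1 < n → ∀ i : Fin n,
      (∀ c : C, x i ≠ Sum.inl (iA c)) ∧ (∀ c : C, x i ≠ Sum.inr (iB c)))
    (hone : n = 1 → ∀ i : Fin n, x i ≠ Sum.inl 1 ∧ x i ≠ Sum.inr 1) :
    (List.ofFn fun i => Sum.elim (⇑jA) (⇑jB) (x i)).prod ≠ 1 := by
  let φ := MonoidHom.cond iA iB
  have hφ : ∀ b, Injective (φ b) := Bool.forall_bool.2 ⟨hiA, hiB⟩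
  obtain ⟨f, ⟨hfA, hfB⟩, -⟩ :=
    huniv (PushoutI φ) (PushoutI.of (φ := φ) false) (PushoutI.of (φ := φ) true)
      ((PushoutI.of_comp_eq_base false).trans (PushoutI.of_comp_eq_base true).symm)
  let e := Equiv.sumEquivSigmaBool A B
  have hf_letter (s : A ⊕ B) : f (Sum.elim jA jB s) = PushoutI.of (e s).1 (e s).2 := by
    rcases s with a | b
    exacts [DFunLike.congr_fun hfA a, DFunLike.congr_fun hfB b]
  intro hprod
  replace hprod : ((List.ofFn (e ∘ x)).map fun g => PushoutI.of (φ := φ) g.1 g.2).prod = 1 := by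
    simpa [map_list_prod, List.map_ofFn, comp_def, hf_letter] using congrArg f hprod
  rcases hn.eq_or_lt with rfl | hlong
  · have hletter := hone rfl 0
    refine Equiv.sumEquivSigmaBool_snd_ne_one hletter.1 hletter.2 ?_
    refine (injective_iff_map_eq_one _).1 (PushoutI.of_injective hφ _) _ ?_
    simpa using hprod
  · refine PushoutI.list_prod_map_of_ne_one hφ (List.ofFn_eq_nil_iff.not.2 (by omega)) ?_ ?_ hprod
    · refine List.isChain_ofFn.2 fun i hi h => halt i hi (Bool.not_inj ?_)
      simpa only [comp_apply, e, Equiv.sumEquivSigmaBool_fst] using h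
    · exact List.forall_mem_ofFn_iff.2 fun i =>
        Equiv.sumEquivSigmaBool_snd_notMem_range (hnotC hlong i).1 (hnotC hlong i).2

/-- Normal form theorem for amalgamated free products: `P` is the pushout of
`A ← C → B` (with `C` embedding in both factors); a reduced word has nontrivial
product in `P`. Letters are modeled as elements of `A ⊕ B`. -/
theorem stmt13 {A B C P : Type} [Group A] [Group B] [Group C] [Group P]
    (iA : C →* A) (iB : C →* B)
    (hiA : Function.Injective iA) (hiB : Function.Injective iB)
    (jA : A →* P) (jB : B →* P) (hcomm : jA.comp iA = jB.comp iB)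
    (huniv : ∀ (Q : Type) [Group Q] (fA : A →* Q) (fB : B →* Q),
      fA.comp iA = fB.comp iB →
        ∃! f : P →* Q, f.comp jA = fA ∧ f.comp jB = fB)
    (n : ℕ) (hn : 1 ≤ n) (x : Fin n → A ⊕ B)
    (halt : ∀ (i : ℕ) (h : i + 1 < n),
      (x ⟨i, Nat.lt_of_succ_lt h⟩).isLeft ≠ (x ⟨i + 1, h⟩).isLeft)
    (hnotC : 1 < n → ∀ i : Fin n,
      (∀ c : C, x i ≠ Sum.inl (iA c)) ∧ (∀ c : C, x i ≠ Sum.inr (iB c)))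
    (hone : n = 1 → ∀ i : Fin n, x i ≠ Sum.inl 1 ∧ x i ≠ Sum.inr 1) :
    (List.ofFn fun i => Sum.elim (⇑jA) (⇑jB) (x i)).prod ≠ 1 :=
  stmt13_general iA iB hiA hiB jA jB huniv n hn x halt hnotC hone
end
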